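/- Let n ≥ 3 be an integer and m = 2^{n−1}+2^{n−3}. The map Φ2 defined on the vertex set of BDM(2,m) by Φ2((α,i)_β) = (α, i + α·2^{n−2} + (1−α)·2^{n−3})_β is an automorphism of BDM(2,m) of order 5: Φ2^5 is the identity and Φ2^r is not the identity for r = 1, 2, 3, 4. -/
import Mathlib


/-- Vertices of `BDM(2,m)`: `(α, i)_β` is encoded as `(α, i, β)` with `α β : Bool`, `i : ZMod m`. -/
abbrev BDMVertex (m : ℕ) := Bool × ZMod m × Bool

/-- The unique out-neighbour (through an arc) of a vertex of `BDM(2,m)`. -/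
def bdmOut (m : ℕ) : BDMVertex m → BDMVertex m
  | (false, i, false) => (true, 2 * i, true)
  | (false, i, true) => (true, 2 * i + 1, false)
  | (true, i, false) => (false, -2 * i - 1, true)
  | (true, i, true) => (false, -2 * i - 2, false)

/-- The edges of `BDM(2,m)`: `(α,i)_0 ∼ (α,i)_1`. -/
def bdmEdge (m : ℕ) (u v : BDMVertex m) : Prop :=
  u.1 = v.1 ∧ u.2.1 = v.2.1 ∧ u.2.2 = !v.2.2

/-- The arcs of `BDM(2,m)`. -/
def bdmArc (m : ℕ) (u v : BDMVertex m) : Prop := v = bdmOut m u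

/-- One step in the associated digraph of `BDM(2,m)` (edge or arc). -/
def bdmStep (m : ℕ) (u v : BDMVertex m) : Prop := bdmEdge m u v ∨ bdmArc m u v

/-- `hasWalk step d u v` : there is a directed walk of length `d` from `u` to `v`. -/
def hasWalk {V : Type*} (step : V → V → Prop) : ℕ → V → V → Prop
  | 0, u, v => u = v
  | d + 1, u, v => ∃ w, step u w ∧ hasWalk step d w v

/-- The map $Φ_2((α,i)_β) = (α, i + α·2^{n-2} + (1-α)·2^{n-3})_β$. -/
def Phi2 (n m : ℕ) : BDMVertex m → BDMVertex m :=
  fun u => (u.1, u.2.1 + (if u.1 then (2 ^ (n - 2) : ZMod m) else (2 ^ (n - 3) : ZMod m)), u.2.2)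

/-- For $n ≥ 3$ and $m = 2^{n-1} + 2^{n-3}$, the map $Φ_2$ is an automorphism of
$BDM(2,m)$ of order exactly $5$. -/
theorem Phi2_automorphism_order_five (n m : ℕ) (hn : 3 ≤ n)
    (hm : m = 2 ^ (n - 1) + 2 ^ (n - 3)) :
    Function.Bijective (Phi2 n m) ∧
    (∀ u v : BDMVertex m, bdmEdge m u v ↔ bdmEdge m (Phi2 n m u) (Phi2 n m v)) ∧
    (∀ u v : BDMVertex m, bdmArc m u v ↔ bdmArc m (Phi2 n m u) (Phi2 n m v)) ∧
    (Phi2 n m)^[5] = id ∧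
    (∀ r : ℕ, 1 ≤ r → r ≤ 4 → (Phi2 n m)^[r] ≠ id) := by
  obtain ⟨k, rfl⟩ : ∃ k, n = k + 3 := ⟨n - 3, by omega⟩
  subst hm
  set M : ℕ := 2 ^ (k + 3 - 1) + 2 ^ (k + 3 - 3) with hM
  have hMval : M = 5 * 2 ^ k := by
    have e1 : k + 3 - 1 = k + 2 := by omega
    have e2 : k + 3 - 3 = k := by omega
    rw [hM, e1, e2]; ring
  have h5 : (2 : ZMod M) ^ k * 5 = 0 := by
    have : ((5 * 2 ^ k : ℕ) : ZMod M) = 0 := by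
      rw [← hMval]; exact ZMod.natCast_self M
    push_cast at this
    linear_combination this
  have hPhi : ∀ u : BDMVertex M,
      Phi2 (k + 3) M u = (u.1, u.2.1 + (if u.1 then (2:ZMod M)^(k+1) else (2:ZMod M)^k), u.2.2) := by
    intro u; rfl
  have key : ∀ r : ℕ, 1 ≤ r → r ≤ 4 → ((r : ZMod M) * 2 ^ k) ≠ 0 := by
    intro r h1 h4 h
    have : ((r * 2 ^ k : ℕ) : ZMod M) = 0 := by push_cast; linear_combination h
    rw [ZMod.natCast_eq_zero_iff, hMval] at this
    have hle : 5 * 2 ^ k ≤ r * 2 ^ k := Nat.le_of_dvd (by positivity) this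
    have : 2 ^ k > 0 := by positivity
    nlinarith
  refine ⟨?_, ?_, ?_, ?_, ?_⟩
  · refine Function.bijective_iff_has_inverse.mpr
      ⟨fun u => (u.1, u.2.1 - (if u.1 then (2:ZMod M)^(k+1) else (2:ZMod M)^k), u.2.2), ?_, ?_⟩ <;>
    · rintro ⟨a, i, b⟩
      cases a <;> simp [hPhi]
  · rintro ⟨a1, i1, b1⟩ ⟨a2, i2, b2⟩
    simp [bdmEdge, hPhi, Prod.ext_iff]
    intro h; subst h
    cases a1 <;> simp
  · rintro ⟨a1, i1, b1⟩ ⟨a2, i2, b2⟩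
    cases a1 <;> cases b1 <;> cases a2 <;> cases b2 <;>
      simp [bdmArc, bdmOut, hPhi, Prod.ext_iff] <;>
      constructor <;> intro h <;>
      first
        | linear_combination h
        | linear_combination h + h5
        | linear_combination h - h5
        | linear_combination h + 2 * h5
        | linear_combination h - 2 * h5
  · funext u
    rcases u with ⟨a, i, b⟩
    cases a <;>
    · simp only [Function.iterate_succ, Function.iterate_zero, Function.comp_apply,
        id_eq, hPhi]
      simp [Prod.ext_iff]
      first
        | linear_combination h5
        | linear_combination 2 * h5
        | linear_combination -h5
        | linear_combination -2 * h5
  · intro r h1 h4 heq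
    have hc := congrFun heq (false, (0 : ZMod M), false)
    interval_cases r <;>
    · simp only [Function.iterate_succ, Function.iterate_zero, Function.comp_apply,
        id_eq, hPhi] at hc
      simp [Prod.ext_iff] at hc
      first
        | exact key 1 (by norm_num) (by norm_num) (by push_cast; linear_combination hc)
        | exact key 2 (by norm_num) (by norm_num) (by push_cast; linear_combination hc)
        | exact key 3 (by norm_num) (by norm_num) (by push_cast; linear_combination hc)
        | exact key 4 (by norm_num) (by norm_num) (by push_cast; linear_combination hc)
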